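/- arXiv:1001.1231 — 8 statements merged into one kernel-verified Lean document; each statement's English description precedes it below -/
import Mathlib

section
/- For all real numbers x_A and x_B with 1/2 ≤ x_A ≤ x_B ≤ 1, one has x_A(1 - x_B) ≤ e^{-(x_A + x_B)}. -/
theorem stmt0 (xA xB : ℝ) (h1 : 1/2 ≤ xA) (h2 : xA ≤ xB) (h3 : xB ≤ 1) :
    xA * (1 - xB) ≤ Real.exp (-(xA + xB)) := by
  have h4 : (0:ℝ) ≤ 2 - (xA + xB) := by linarith
  have e1 : Real.exp (-(xA + xB)) = Real.exp (-2) * Real.exp (2 - (xA + xB)) := by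
    rw [← Real.exp_add]; ring_nf
  have half : (0:ℝ) ≤ (2 - (xA + xB)) / 2 := by linarith
  have e2 : (1 + (2 - (xA + xB)) / 2) ^ 2 ≤ Real.exp (2 - (xA + xB)) := by
    have h := Real.add_one_le_exp ((2 - (xA + xB)) / 2)
    have hpos : (0:ℝ) ≤ 1 + (2 - (xA + xB)) / 2 := by linarith
    calc (1 + (2 - (xA + xB)) / 2) ^ 2
        ≤ (Real.exp ((2 - (xA + xB)) / 2)) ^ 2 := by
          apply pow_le_pow_left₀ hpos; linarith
      _ = Real.exp (2 - (xA + xB)) := by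
          rw [sq, ← Real.exp_add]; ring_nf
  have e3 : (0.135 : ℝ) ≤ Real.exp (-2) := by
    have h2le : Real.exp 2 ≤ 7.4 := by
      have h1e : Real.exp 1 ≤ 2.7182818286 := le_of_lt Real.exp_one_lt_d9
      have h2eq : Real.exp 2 = Real.exp 1 * Real.exp 1 := by
        rw [← Real.exp_add]; norm_num
      nlinarith [Real.exp_pos 1]
    rw [Real.exp_neg, inv_eq_one_div, le_div_iff₀ (Real.exp_pos 2)]
    nlinarith
  have e4 : Real.exp (-2) * (1 + (2 - (xA + xB)) / 2) ^ 2 ≤ Real.exp (-(xA + xB)) := by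
    rw [e1]
    exact mul_le_mul_of_nonneg_left e2 (le_of_lt (Real.exp_pos _))
  have e5 : (0.135 : ℝ) * (1 + (2 - (xA + xB)) / 2) ^ 2 ≤
      Real.exp (-2) * (1 + (2 - (xA + xB)) / 2) ^ 2 :=
    mul_le_mul_of_nonneg_right e3 (sq_nonneg _)
  have key : xA * (1 - xB) ≤ (0.135 : ℝ) * (1 + (2 - (xA + xB)) / 2) ^ 2 := by
    nlinarith [mul_nonneg (by linarith : (0:ℝ) ≤ xB - xA) (by linarith : (0:ℝ) ≤ 1 - xB),
      mul_nonneg (by linarith : (0:ℝ) ≤ xA - 1/2) (by linarith : (0:ℝ) ≤ 1 - xB),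
      sq_nonneg (xA + xB - 1.4), sq_nonneg (xA - xB), sq_nonneg (xA + xB - 2)]
  linarith
end

section
/- Let x : A → (0,1) assign weights to a finite set A of events, and suppose δ ≤ 1/4 where δ = min over A ∈ A of x(A)·∏_{B ∈ A, B ≠ A}(1 - x(B)), taking the product over all other events in A. Then ∑_{B ∈ A} x(B) ≤ log₂(1/δ). -/
/-! Write `S = ∑ x`. Since `1 - t ≤ 2⁻ᵗ` for `t ≥ 0`, it suffices to beat `2^(-x a - x b)` with the
two factors `x a (1 - x b)` for some `a ≠ b`, and taking `a` to minimise `x` gives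
`x a (1 - x b) ≤ x a (1 - x a) ≤ 1/4 ≤ 2^(-x a - x b)`. So `δ ≤ 2⁻ˢ` as soon as `|A| ≥ 2`; when `A`
is a singleton, `S < 1` and the hypothesis `δ ≤ 1/4` gives the same bound. -/

open Real Finset

lemma one_sub_le_two_rpow_neg {t : ℝ} (ht : 0 ≤ t) : 1 - t ≤ (2 : ℝ) ^ (-t) := by
  have hlog : log 2 ≤ 1 := by linarith [log_two_lt_d9]
  calc 1 - t ≤ -(log 2 * t) + 1 := by nlinarith
    _ ≤ exp (-(log 2 * t)) := add_one_le_exp _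
    _ = (2 : ℝ) ^ (-t) := by rw [rpow_def_of_pos two_pos, mul_neg]

lemma prod_one_sub_le_two_rpow_neg_sum {ι : Type*} {s : Finset ι} {x : ι → ℝ}
    (hx : ∀ i ∈ s, x i ∈ Set.Icc (0 : ℝ) 1) :
    ∏ i ∈ s, (1 - x i) ≤ (2 : ℝ) ^ (-∑ i ∈ s, x i) := by
  rw [← sum_neg_distrib, rpow_sum_of_pos two_pos]
  exact prod_le_prod (fun i hi => sub_nonneg.2 (hx i hi).2)
    fun i hi => one_sub_le_two_rpow_neg (hx i hi).1

lemma mul_prod_erase_one_sub_le_two_rpow_neg_sum {ι : Type*} [DecidableEq ι] {s : Finset ι}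
    {x : ι → ℝ} (hx : ∀ i ∈ s, x i ∈ Set.Icc (0 : ℝ) 1) {a b : ι} (ha : a ∈ s) (hb : b ∈ s)
    (hba : b ≠ a) (hab : x a ≤ x b) :
    x a * ∏ i ∈ s.erase a, (1 - x i) ≤ (2 : ℝ) ^ (-∑ i ∈ s, x i) := by
  have hb' : b ∈ s.erase a := mem_erase.2 ⟨hba, hb⟩
  set r := (s.erase a).erase b
  have hr : ∀ i ∈ r, x i ∈ Set.Icc (0 : ℝ) 1 := fun i hi =>
    hx i (mem_of_mem_erase (mem_of_mem_erase hi))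
  obtain ⟨hxa₀, hxa₁⟩ := hx a ha
  have hxb₁ := (hx b hb).2
  have hpair : x a * (1 - x b) ≤ (2 : ℝ) ^ (-(x a + x b)) :=
    calc x a * (1 - x b) ≤ x a * (1 - x a) := by gcongr
      _ ≤ 1 / 4 := by nlinarith [sq_nonneg (x a - 1 / 2)]
      _ = (2 : ℝ) ^ (-2 : ℝ) := by norm_num
      _ ≤ (2 : ℝ) ^ (-(x a + x b)) := rpow_le_rpow_of_exponent_le one_le_two (by linarith)
  calc x a * ∏ i ∈ s.erase a, (1 - x i) = x a * (1 - x b) * ∏ i ∈ r, (1 - x i) := by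
        rw [← mul_prod_erase _ _ hb', mul_assoc]
    _ ≤ (2 : ℝ) ^ (-(x a + x b)) * (2 : ℝ) ^ (-∑ i ∈ r, x i) :=
        mul_le_mul hpair (prod_one_sub_le_two_rpow_neg_sum hr)
          (prod_nonneg fun i hi => sub_nonneg.2 (hr i hi).2) (rpow_nonneg zero_le_two _)
    _ = (2 : ℝ) ^ (-∑ i ∈ s, x i) := by
        rw [← rpow_add two_pos, ← add_sum_erase _ _ ha, ← add_sum_erase _ _ hb', ← add_assoc,
          neg_add (x a + x b)]

theorem stmt3 {ι : Type*} [DecidableEq ι] (A : Finset ι) (hA : A.Nonempty)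
    (x : ι → ℝ) (hx : ∀ a ∈ A, x a ∈ Set.Ioo (0:ℝ) 1)
    (δ : ℝ)
    (hδ : δ = A.inf' hA (fun a => x a * ∏ b ∈ A.erase a, (1 - x b)))
    (hδ4 : δ ≤ 1/4) :
    ∑ a ∈ A, x a ≤ Real.logb 2 (1/δ) := by
  have hx' : ∀ a ∈ A, x a ∈ Set.Icc (0 : ℝ) 1 := fun a ha => Set.Ioo_subset_Icc_self (hx a ha)
  have hδpos : 0 < δ := by
    rw [hδ, lt_inf'_iff]
    exact fun a ha => mul_pos (hx a ha).1 <| prod_pos fun b hb =>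
      sub_pos.2 (hx b (mem_of_mem_erase hb)).2
  suffices h : δ ≤ (2 : ℝ) ^ (-∑ a ∈ A, x a) by
    rwa [le_logb_iff_rpow_le one_lt_two (by positivity), le_one_div (by positivity) hδpos,
      one_div, ← rpow_neg zero_le_two]
  obtain ⟨a, ha, hmin⟩ := A.exists_min_image x hA
  rcases A.eq_singleton_or_nontrivial ha with rfl | hnt
  · calc δ ≤ (2 : ℝ) ^ (-2 : ℝ) := by norm_num [hδ4]
      _ ≤ (2 : ℝ) ^ (-∑ a ∈ {a}, x a) := rpow_le_rpow_of_exponent_le one_le_two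
          (by simp only [sum_singleton]; linarith [(hx a ha).2])
  · obtain ⟨b, hb, hba⟩ := hnt.exists_ne a
    calc δ ≤ x a * ∏ c ∈ A.erase a, (1 - x c) := hδ ▸ inf'_le _ ha
      _ ≤ (2 : ℝ) ^ (-∑ a ∈ A, x a) :=
          mul_prod_erase_one_sub_le_two_rpow_neg_sum hx' ha hb hba (hmin b hb)
end

section
/- Let P = {P₁,…,Pₙ} be mutually independent random variables and A = {A₁,…,A_m} events each determined by a subset of P, with dependency relation Γ(A) = {B ∈ A, B ≠ A : vbl(A) ∩ vbl(B) ≠ ∅}. If there exists x : A → (0,1) with Pr[A] ≤ x(A)·∏_{B ∈ Γ(A)}(1 − x(B)) for all A ∈ A, then Pr[⋂_{A ∈ A} Aᶜ] ≥ ∏_{A ∈ A}(1 − x(A)) > 0. -/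
open MeasureTheory
set_option linter.unusedSectionVars false

section aux
variable {n : ℕ} {α : Fin n → Type*} [∀ i, MeasurableSpace (α i)]
  (μ : ∀ i, Measure (α i)) [∀ i, IsProbabilityMeasure (μ i)]

lemma lll_indep_split (s : Finset (Fin n)) (U : Set (∀ i : s, α i))
    (V : Set (∀ i : {i : Fin n // i ∉ s}, α i)) (hU : MeasurableSet U) (hV : MeasurableSet V) :
    Measure.pi μ ((fun ω (i : s) => ω i.1) ⁻¹' U ∩ (fun ω (i : {i : Fin n // i ∉ s}) => ω i.1) ⁻¹' V)
      = Measure.pi μ ((fun ω (i : s) => ω i.1) ⁻¹' U) *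
        Measure.pi μ ((fun ω (i : {i : Fin n // i ∉ s}) => ω i.1) ⁻¹' V) := by
  classical
  have hmp := measurePreserving_piEquivPiSubtypeProd μ (fun i => i ∈ s)
  set e := MeasurableEquiv.piEquivPiSubtypeProd α (fun i => i ∈ s) with he
  have hpre : ∀ (U' : Set (∀ i : s, α i)) (V' : Set (∀ i : {i : Fin n // i ∉ s}, α i)),
      e ⁻¹' (U' ×ˢ V') =
        (fun ω (i : s) => ω i.1) ⁻¹' U' ∩ (fun ω (i : {i : Fin n // i ∉ s}) => ω i.1) ⁻¹' V' := by
    intro U' V'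
    rfl
  have key : ∀ (U' : Set (∀ i : s, α i)) (V' : Set (∀ i : {i : Fin n // i ∉ s}, α i)),
      MeasurableSet U' → MeasurableSet V' →
      Measure.pi μ ((fun ω (i : s) => ω i.1) ⁻¹' U' ∩
          (fun ω (i : {i : Fin n // i ∉ s}) => ω i.1) ⁻¹' V') =
        Measure.pi (fun i : s => μ i) U' * Measure.pi (fun i : {i : Fin n // i ∉ s} => μ i) V' := by
    intro U' V' hU' hV'
    rw [← hpre, ← Measure.prod_prod]
    exact (hmp.measure_preimage (hU'.prod hV').nullMeasurableSet).trans (by congr!)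
  have h1 := key U Set.univ hU MeasurableSet.univ
  have h2 := key Set.univ V MeasurableSet.univ hV
  have h3 := key U V hU hV
  simp only [Set.preimage_univ, Set.inter_univ, Set.univ_inter, measure_univ, mul_one, one_mul] at h1 h2 h3
  rw [h1, h2, h3]
end aux

section aux
variable {n : ℕ} {α : Fin n → Type*} [∀ i, MeasurableSpace (α i)]

/-- intersection of complements over a finset of indices -/
def lllC {m : ℕ} (A : Fin m → Set (∀ i, α i)) (T : Finset (Fin m)) : Set (∀ i, α i) :=
  ⋂ k ∈ T, (A k)ᶜ

lemma lllC_empty {m : ℕ} (A : Fin m → Set (∀ i, α i)) : lllC A ∅ = Set.univ := by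
  simp [lllC]

lemma lllC_insert {m : ℕ} (A : Fin m → Set (∀ i, α i)) (a : Fin m) (T : Finset (Fin m)) :
    lllC A (insert a T) = lllC A T \ A a := by
  simp only [lllC, Finset.mem_insert, Set.iInter_iInter_eq_or_left]
  rw [Set.diff_eq, Set.inter_comm]

lemma lllC_union {m : ℕ} (A : Fin m → Set (∀ i, α i)) (T₁ T₂ : Finset (Fin m)) :
    lllC A (T₁ ∪ T₂) = lllC A T₁ ∩ lllC A T₂ := by
  simp only [lllC, Finset.mem_union, Set.iInter_or]
  exact Set.iInter_inter_distrib _ _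

lemma lllC_anti {m : ℕ} (A : Fin m → Set (∀ i, α i)) {T₁ T₂ : Finset (Fin m)} (h : T₁ ⊆ T₂) :
    lllC A T₂ ⊆ lllC A T₁ :=
  Set.biInter_subset_biInter_left h

lemma lllC_meas {m : ℕ} (A : Fin m → Set (∀ i, α i)) (hA : ∀ j, MeasurableSet (A j))
    (T : Finset (Fin m)) : MeasurableSet (lllC A T) :=
  MeasurableSet.biInter T.countable_toSet fun k _ => (hA k).compl

end aux
section core
variable {n : ℕ} {α : Fin n → Type*} [∀ i, MeasurableSpace (α i)]
  (μ : ∀ i, Measure (α i)) [∀ i, IsProbabilityMeasure (μ i)]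

lemma lll_core {m : ℕ} (A : Fin m → Set (∀ i, α i)) (vbl : Fin m → Finset (Fin n))
    (S : ∀ j, Set (∀ i : vbl j, α i.1))
    (hS : ∀ j, MeasurableSet (S j))
    (hA : ∀ j, A j = (fun ω (i : vbl j) => ω i.1) ⁻¹' S j)
    (x : Fin m → ℝ) (hx : ∀ j, x j ∈ Set.Ioo (0:ℝ) 1)
    (hcond : ∀ j, ((Measure.pi μ) (A j)).toReal ≤
      x j * ∏ k ∈ Finset.univ.filter (fun k => k ≠ j ∧ (vbl j ∩ vbl k).Nonempty), (1 - x k)) :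
    ∀ N (T : Finset (Fin m)), T.card ≤ N → ∀ j, j ∉ T →
      ((Measure.pi μ) (A j ∩ lllC A T)).toReal ≤ x j * ((Measure.pi μ) (lllC A T)).toReal := by
  classical
  haveI : ∀ i, Nonempty (α i) := fun i => by
    by_contra h
    rw [not_nonempty_iff] at h
    have h1 : (μ i) Set.univ = 1 := measure_univ
    rw [Set.univ_eq_empty_iff.mpr h, measure_empty] at h1
    exact one_ne_zero h1.symm
  have hAmeas : ∀ j, MeasurableSet (A j) := by
    intro j
    rw [hA j]
    exact (hS j).preimage (measurable_pi_lambda _ fun i => measurable_pi_apply _)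
  have hxpos : ∀ k, (0:ℝ) ≤ 1 - x k := fun k => by linarith [(hx k).2]
  have hxle : ∀ k, 1 - x k ≤ 1 := fun k => by linarith [(hx k).1]
  have hPnn : ∀ s : Set (∀ i, α i), 0 ≤ ((Measure.pi μ) s).toReal := fun s => ENNReal.toReal_nonneg
  have hPmono : ∀ {s t : Set (∀ i, α i)}, s ⊆ t →
      ((Measure.pi μ) s).toReal ≤ ((Measure.pi μ) t).toReal := fun h =>
    ENNReal.toReal_mono (measure_ne_top _ _) (measure_mono h)
  have hPdiff : ∀ (D B : Set (∀ i, α i)), MeasurableSet B →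
      ((Measure.pi μ) (D \ B)).toReal =
        ((Measure.pi μ) D).toReal - ((Measure.pi μ) (D ∩ B)).toReal := by
    intro D B hB
    have h := measure_inter_add_diff (μ := Measure.pi μ) D hB
    have := ENNReal.toReal_add (measure_ne_top (Measure.pi μ) (D ∩ B))
      (measure_ne_top (Measure.pi μ) (D \ B))
    rw [h] at this
    linarith [this]
  intro N
  induction N with
  | zero =>
    intro T hT j _
    have hTe : T = ∅ := Finset.card_eq_zero.mp (Nat.le_zero.mp hT)
    subst hTe
    rw [lllC_empty, Set.inter_univ, measure_univ, ENNReal.toReal_one, mul_one]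
    calc ((Measure.pi μ) (A j)).toReal ≤ x j * ∏ k ∈ Finset.univ.filter
          (fun k => k ≠ j ∧ (vbl j ∩ vbl k).Nonempty), (1 - x k) := hcond j
      _ ≤ x j * 1 := by
          apply mul_le_mul_of_nonneg_left _ (le_of_lt (hx j).1)
          exact Finset.prod_le_one (fun k _ => hxpos k) (fun k _ => hxle k)
      _ = x j := mul_one _
  | succ N IH =>
    intro T hT j hj
    set T₁ := T.filter (fun k => (vbl j ∩ vbl k).Nonempty) with hT₁def
    set T₂ := T.filter (fun k => ¬(vbl j ∩ vbl k).Nonempty) with hT₂def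
    have hT12 : T₁ ∪ T₂ = T := Finset.filter_union_filter_not_eq _ T
    have hT₁sub : T₁ ⊆ T := Finset.filter_subset _ T
    have hT₂sub : T₂ ⊆ T := Finset.filter_subset _ T
    -- independence
    have hproj : ∀ k, ∀ hk : k ∈ T₂, ∃ g : (∀ i : {i : Fin n // i ∉ vbl j}, α i.1) → (∀ i : vbl k, α i.1),
        Measurable g ∧ ∀ ω : ∀ i, α i, g (fun i => ω i.1) = fun i : vbl k => ω i.1 := by
      intro k hk
      have hdisj : ∀ i ∈ vbl k, i ∉ vbl j := by
        intro i hi hij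
        exact (Finset.mem_filter.mp hk).2 ⟨i, Finset.mem_inter.mpr ⟨hij, hi⟩⟩
      exact ⟨fun f i => f ⟨i.1, hdisj i.1 i.2⟩,
        measurable_pi_lambda _ fun i => measurable_pi_apply _, fun ω => rfl⟩
    set V : Set (∀ i : {i : Fin n // i ∉ vbl j}, α i.1) :=
      ⋂ k, ⋂ hk : k ∈ T₂, ((hproj k hk).choose ⁻¹' S k)ᶜ with hVdef
    have hVmeas : MeasurableSet V :=
      MeasurableSet.iInter fun k => MeasurableSet.iInter fun hk =>
        (((hproj k hk).choose_spec.1 (hS k))).compl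
    have hVpre : (fun ω (i : {i : Fin n // i ∉ vbl j}) => ω i.1) ⁻¹' V = lllC A T₂ := by
      rw [hVdef]
      simp only [Set.preimage_iInter, Set.preimage_compl, lllC]
      apply Set.iInter_congr; intro k
      apply Set.iInter_congr; intro hk
      congr 1
      ext ω
      have hspec := (hproj k hk).choose_spec.2 ω
      simp only [Set.mem_preimage, hA k]
      rw [show ((hproj k hk).choose fun i => ω i.1) = fun i : vbl k => ω i.1 from hspec]
    have hindep : (Measure.pi μ) (A j ∩ lllC A T₂) =
        (Measure.pi μ) (A j) * (Measure.pi μ) (lllC A T₂) := by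
      rw [hA j, ← hVpre]
      exact lll_indep_split μ (vbl j) (S j) V (hS j) hVmeas
    have hindepR : ((Measure.pi μ) (A j ∩ lllC A T₂)).toReal =
        ((Measure.pi μ) (A j)).toReal * ((Measure.pi μ) (lllC A T₂)).toReal := by
      rw [hindep, ENNReal.toReal_mul]
    -- chain
    have hchain : ∀ T' : Finset (Fin m), T' ⊆ T₁ →
        (∏ k ∈ T', (1 - x k)) * ((Measure.pi μ) (lllC A T₂)).toReal ≤
          ((Measure.pi μ) (lllC A (T₂ ∪ T'))).toReal := by
      intro T'
      induction T' using Finset.induction_on with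
      | empty => intro _; simp
      | @insert a T' ha ih =>
        intro hsub
        have haT₁ : a ∈ T₁ := hsub (Finset.mem_insert_self a T')
        have hT'T₁ : T' ⊆ T₁ := fun k hk => hsub (Finset.mem_insert_of_mem hk)
        have haT : a ∈ T := hT₁sub haT₁
        have haT₂ : a ∉ T₂ := by
          intro hc
          exact (Finset.mem_filter.mp hc).2 (Finset.mem_filter.mp haT₁).2
        have haW : a ∉ T₂ ∪ T' := by
          simp only [Finset.mem_union]
          rintro (h | h)
          · exact haT₂ h
          · exact ha h
        have hWcard : (T₂ ∪ T').card ≤ N := by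
          have hWsub : T₂ ∪ T' ⊆ T.erase a := by
            intro k hk
            refine Finset.mem_erase.mpr ⟨?_, ?_⟩
            · rintro rfl; exact haW hk
            · rcases Finset.mem_union.mp hk with h | h
              · exact hT₂sub h
              · exact hT₁sub (hT'T₁ h)
          have := Finset.card_le_card hWsub
          rw [Finset.card_erase_of_mem haT] at this
          omega
        have hIH := IH (T₂ ∪ T') hWcard a haW
        have hstep : ((Measure.pi μ) (lllC A (T₂ ∪ insert a T'))).toReal =
            ((Measure.pi μ) (lllC A (T₂ ∪ T'))).toReal -
              ((Measure.pi μ) (lllC A (T₂ ∪ T') ∩ A a)).toReal := by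
          rw [Finset.union_insert, lllC_insert, hPdiff _ _ (hAmeas a)]
        have hic : lllC A (T₂ ∪ T') ∩ A a = A a ∩ lllC A (T₂ ∪ T') := Set.inter_comm _ _
        rw [Finset.prod_insert ha, hstep, hic]
        have h1 := ih hT'T₁
        have h2 := hPnn (lllC A (T₂ ∪ T'))
        have h3 := hxpos a
        nlinarith [mul_le_mul_of_nonneg_left h1 h3]
    -- assembly
    have hsubΓ : T₁ ⊆ Finset.univ.filter (fun k => k ≠ j ∧ (vbl j ∩ vbl k).Nonempty) := by
      intro k hk
      rw [Finset.mem_filter] at hk ⊢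
      refine ⟨Finset.mem_univ k, ?_, hk.2⟩
      rintro rfl; exact hj hk.1
    have hprodmono : ∏ k ∈ Finset.univ.filter (fun k => k ≠ j ∧ (vbl j ∩ vbl k).Nonempty),
        (1 - x k) ≤ ∏ k ∈ T₁, (1 - x k) := by
      rw [← Finset.prod_sdiff hsubΓ]
      have h1 : ∏ k ∈ Finset.univ.filter (fun k => k ≠ j ∧ (vbl j ∩ vbl k).Nonempty) \ T₁,
          (1 - x k) ≤ 1 := Finset.prod_le_one (fun k _ => hxpos k) (fun k _ => hxle k)
      have h2 : (0:ℝ) ≤ ∏ k ∈ T₁, (1 - x k) := Finset.prod_nonneg (fun k _ => hxpos k)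
      nlinarith
    have hAj : ((Measure.pi μ) (A j)).toReal ≤ x j * ∏ k ∈ T₁, (1 - x k) :=
      (hcond j).trans (mul_le_mul_of_nonneg_left hprodmono (le_of_lt (hx j).1))
    have hmono1 : ((Measure.pi μ) (A j ∩ lllC A T)).toReal ≤
        ((Measure.pi μ) (A j ∩ lllC A T₂)).toReal :=
      hPmono (Set.inter_subset_inter_right _ (lllC_anti A hT₂sub))
    have hch := hchain T₁ (le_refl _)
    rw [Finset.union_comm, hT12] at hch
    have h2 := hPnn (lllC A T₂)
    have h3 := hPnn (A j)
    have h4 := Finset.prod_nonneg (fun k (_ : k ∈ T₁) => hxpos k)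
    calc ((Measure.pi μ) (A j ∩ lllC A T)).toReal
        ≤ ((Measure.pi μ) (A j)).toReal * ((Measure.pi μ) (lllC A T₂)).toReal := by
          rw [← hindepR]; exact hmono1
      _ ≤ (x j * ∏ k ∈ T₁, (1 - x k)) * ((Measure.pi μ) (lllC A T₂)).toReal :=
          mul_le_mul_of_nonneg_right hAj h2
      _ = x j * ((∏ k ∈ T₁, (1 - x k)) * ((Measure.pi μ) (lllC A T₂)).toReal) := by ring
      _ ≤ x j * ((Measure.pi μ) (lllC A T)).toReal :=
          mul_le_mul_of_nonneg_left hch (le_of_lt (hx j).1)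

end core

section final
variable {n : ℕ} {α : Fin n → Type*} [∀ i, MeasurableSpace (α i)]
  (μ : ∀ i, Measure (α i)) [∀ i, IsProbabilityMeasure (μ i)]

lemma lll_lower {m : ℕ} (A : Fin m → Set (∀ i, α i)) (vbl : Fin m → Finset (Fin n))
    (S : ∀ j, Set (∀ i : vbl j, α i.1))
    (hS : ∀ j, MeasurableSet (S j))
    (hA : ∀ j, A j = (fun ω (i : vbl j) => ω i.1) ⁻¹' S j)
    (x : Fin m → ℝ) (hx : ∀ j, x j ∈ Set.Ioo (0:ℝ) 1)
    (hcond : ∀ j, ((Measure.pi μ) (A j)).toReal ≤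
      x j * ∏ k ∈ Finset.univ.filter (fun k => k ≠ j ∧ (vbl j ∩ vbl k).Nonempty), (1 - x k)) :
    ∀ T : Finset (Fin m), ∏ k ∈ T, (1 - x k) ≤ ((Measure.pi μ) (lllC A T)).toReal := by
  classical
  have hcore := lll_core μ A vbl S hS hA x hx hcond
  have hAmeas : ∀ j, MeasurableSet (A j) := by
    intro j
    rw [hA j]
    exact (hS j).preimage (measurable_pi_lambda _ fun i => measurable_pi_apply _)
  have hPdiff : ∀ (D B : Set (∀ i, α i)), MeasurableSet B →
      ((Measure.pi μ) (D \ B)).toReal =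
        ((Measure.pi μ) D).toReal - ((Measure.pi μ) (D ∩ B)).toReal := by
    intro D B hB
    have h := measure_inter_add_diff (μ := Measure.pi μ) D hB
    have := ENNReal.toReal_add (measure_ne_top (Measure.pi μ) (D ∩ B))
      (measure_ne_top (Measure.pi μ) (D \ B))
    rw [h] at this
    linarith [this]
  intro T
  induction T using Finset.induction_on with
  | empty => simp [lllC_empty]
  | @insert a T ha ih =>
    have hcr := hcore T.card T (le_refl _) a ha
    rw [lllC_insert, hPdiff _ _ (hAmeas a), Finset.prod_insert ha,
      Set.inter_comm (lllC A T) (A a)]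
    have h2 : (0:ℝ) ≤ ((Measure.pi μ) (lllC A T)).toReal := ENNReal.toReal_nonneg
    have h3 : (0:ℝ) ≤ 1 - x a := by linarith [(hx a).2]
    nlinarith [mul_le_mul_of_nonneg_left ih h3]

end final

theorem stmt5 {n m : ℕ} (α : Fin n → Type*) [∀ i, MeasurableSpace (α i)]
    (μ : ∀ i, Measure (α i)) [∀ i, IsProbabilityMeasure (μ i)]
    (A : Fin m → Set (∀ i, α i)) (vbl : Fin m → Finset (Fin n))
    (hmeas : ∀ j, MeasurableSet[MeasurableSpace.comap
      (fun (ω : ∀ i, α i) (i : vbl j) => ω i.1) MeasurableSpace.pi] (A j))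
    (x : Fin m → ℝ) (hx : ∀ j, x j ∈ Set.Ioo (0:ℝ) 1)
    (hcond : ∀ j, ((Measure.pi μ) (A j)).toReal ≤
      x j * ∏ k ∈ Finset.univ.filter (fun k => k ≠ j ∧ (vbl j ∩ vbl k).Nonempty), (1 - x k)) :
    0 < ∏ j, (1 - x j) ∧
    ∏ j, (1 - x j) ≤ ((Measure.pi μ) (⋂ j, (A j)ᶜ)).toReal := by
  classical
  choose S hS hA using fun j => MeasurableSpace.measurableSet_comap.mp (hmeas j)
  have hA' : ∀ j, A j = (fun ω (i : vbl j) => ω i.1) ⁻¹' S j := fun j => (hA j).symm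
  constructor
  · exact Finset.prod_pos fun j _ => by linarith [(hx j).2]
  · have heq : (⋂ j, (A j)ᶜ) = lllC A Finset.univ := by
      simp [lllC]
    rw [heq]
    exact lll_lower μ A vbl S hS hA' x hx hcond Finset.univ
end

section
/- Under the hypotheses of the asymmetric Lovász Local Lemma (x : A → (0,1) with Pr[A] ≤ x(A)·∏_{C ∈ Γ(A)}(1 − x(C)) for all A ∈ A), for any event B determined by the variables P, the conditional probability satisfies Pr[B | ⋂_{A ∈ A} Aᶜ] ≤ Pr[B] · ∏_{C ∈ Γ(B)}(1 − x(C))⁻¹. -/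
open MeasureTheory ProbabilityTheory Finset

/-!
Write `avoidAll A S` for the event that no `A k` with `k ∈ S` occurs. Strong induction on `S`
gives the core estimate of the local lemma, `Pr[A j ∩ avoidAll A S] ≤ x j * Pr[avoidAll A S]`
for `j ∉ S`; peeling off one event at a time it yields
`Pr[avoidAll A (T ∪ S)] ≥ ∏ k ∈ T, (1 - x k) * Pr[avoidAll A S]` for disjoint `T`, `S`.
For `B`, split the events into `Γ(B)` and the complement `R`: in the variable model `B` is
independent of `avoidAll A R`, so `Pr[B ∩ avoidAll A univ] ≤ Pr[B] Pr[avoidAll A R]`, while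
`Pr[avoidAll A univ] ≥ ∏ k ∈ Γ(B), (1 - x k) * Pr[avoidAll A R]`.
-/

section LocalLemma

variable {Ω κ : Type*} {A : κ → Set Ω}

def avoidAll (A : κ → Set Ω) (S : Finset κ) : Set Ω := ⋂ k ∈ S, (A k)ᶜ

@[simp] lemma avoidAll_empty (A : κ → Set Ω) : avoidAll A ∅ = Set.univ := by
  simp [avoidAll]

@[simp] lemma avoidAll_univ [Fintype κ] (A : κ → Set Ω) :
    avoidAll A univ = ⋂ k, (A k)ᶜ := by
  simp [avoidAll]

lemma avoidAll_insert [DecidableEq κ] (A : κ → Set Ω) (a : κ) (S : Finset κ) :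
    avoidAll A (insert a S) = (A a)ᶜ ∩ avoidAll A S := by
  simp [avoidAll]

lemma avoidAll_anti (A : κ → Set Ω) {S T : Finset κ} (h : S ⊆ T) :
    avoidAll A T ⊆ avoidAll A S :=
  Set.biInter_subset_biInter_left (coe_subset.2 h)

variable [MeasurableSpace Ω] {ν : Measure Ω} {x : κ → ℝ}

lemma measurableSet_avoidAll (hA : ∀ k, MeasurableSet (A k)) (S : Finset κ) :
    MeasurableSet (avoidAll A S) :=
  S.measurableSet_biInter fun k _ => (hA k).compl

variable [IsFiniteMeasure ν]

lemma one_sub_mul_le_measureReal_avoidAll_insert [DecidableEq κ] {a : κ} {S : Finset κ}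
    (ha : MeasurableSet (A a))
    (h : ν.real (A a ∩ avoidAll A S) ≤ x a * ν.real (avoidAll A S)) :
    (1 - x a) * ν.real (avoidAll A S) ≤ ν.real (avoidAll A (insert a S)) := by
  have hsplit := measureReal_sdiff_add_inter (μ := ν) (s := avoidAll A S) ha
  rw [avoidAll_insert, ← Set.sdiff_eq_compl_inter]
  rw [Set.inter_comm] at h
  linarith

lemma prod_one_sub_mul_le_measureReal_avoidAll_of_le [DecidableEq κ]
    (hA : ∀ k, MeasurableSet (A k)) {T S : Finset κ} (hTS : Disjoint T S)
    (hx : ∀ k ∈ T, x k ≤ 1)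
    (hstep : ∀ a ∈ T, ∀ U ⊆ T ∪ S, a ∉ U →
      ν.real (A a ∩ avoidAll A U) ≤ x a * ν.real (avoidAll A U)) :
    (∏ k ∈ T, (1 - x k)) * ν.real (avoidAll A S) ≤ ν.real (avoidAll A (T ∪ S)) := by
  induction T using Finset.induction_on with
  | empty => simp
  | insert a T haT ih =>
    have haTS : a ∉ T ∪ S := by
      simp [haT, disjoint_left.mp hTS (mem_insert_self a T)]
    have hTS' : T ∪ S ⊆ insert a T ∪ S := union_subset_union (subset_insert a T) subset_rfl
    have ih' := ih (disjoint_of_subset_left (subset_insert a T) hTS)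
      (fun k hk => hx k (mem_insert_of_mem hk))
      (fun b hb U hU => hstep b (mem_insert_of_mem hb) U (hU.trans hTS'))
    rw [prod_insert haT, insert_union, mul_assoc]
    calc (1 - x a) * ((∏ k ∈ T, (1 - x k)) * ν.real (avoidAll A S))
        ≤ (1 - x a) * ν.real (avoidAll A (T ∪ S)) :=
          mul_le_mul_of_nonneg_left ih' (sub_nonneg.2 (hx a (mem_insert_self a T)))
      _ ≤ ν.real (avoidAll A (insert a (T ∪ S))) :=
          one_sub_mul_le_measureReal_avoidAll_insert (hA a)
            (hstep a (mem_insert_self a T) _ hTS' haTS)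

theorem measureReal_inter_avoidAll_le [DecidableEq κ] (hA : ∀ k, MeasurableSet (A k))
    (hx : ∀ k, x k ∈ Set.Icc (0 : ℝ) 1) {Γ : κ → Finset κ}
    (hcond : ∀ j, ν.real (A j) ≤ x j * ∏ k ∈ Γ j, (1 - x k))
    (hdep : ∀ j S, j ∉ S → Disjoint S (Γ j) →
      ν.real (A j ∩ avoidAll A S) ≤ ν.real (A j) * ν.real (avoidAll A S))
    (S : Finset κ) {j : κ} (hj : j ∉ S) :
    ν.real (A j ∩ avoidAll A S) ≤ x j * ν.real (avoidAll A S) := by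
  induction S using Finset.strongInduction generalizing j with
  | H S ih =>
  -- `S₁` are the neighbours of `j` in `S`: dropping them only enlarges the left-hand side, and
  -- the induction hypothesis bounds the price `∏ k ∈ S₁, (1 - x k)` of putting them back.
  set S₁ := S.filter (· ∈ Γ j)
  set S₂ := S.filter (· ∉ Γ j)
  have hS : S₁ ∪ S₂ = S := filter_union_filter_not_eq _ S
  have hS₂ : Disjoint S₂ (Γ j) := disjoint_left.2 fun k hk => (mem_filter.1 hk).2
  have hstep : ∀ a ∈ S₁, ∀ U ⊆ S₁ ∪ S₂, a ∉ U →
      ν.real (A a ∩ avoidAll A U) ≤ x a * ν.real (avoidAll A U) := by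
    intro a ha U hU haU
    rw [hS] at hU
    exact ih U ((ssubset_iff_of_subset hU).2 ⟨a, (mem_filter.1 ha).1, haU⟩) haU
  have hΓ : ∏ k ∈ Γ j, (1 - x k) ≤ ∏ k ∈ S₁, (1 - x k) :=
    prod_le_prod_of_subset_of_le_one (fun k hk => (mem_filter.1 hk).2)
      (fun k _ => sub_nonneg.2 (hx k).2) (fun k _ _ => by linarith [(hx k).1])
  calc ν.real (A j ∩ avoidAll A S) ≤ ν.real (A j ∩ avoidAll A S₂) :=
        measureReal_mono (Set.inter_subset_inter_right _ (avoidAll_anti A (filter_subset _ S)))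
    _ ≤ ν.real (A j) * ν.real (avoidAll A S₂) :=
        hdep j S₂ (fun h => hj (mem_filter.1 h).1) hS₂
    _ ≤ x j * ((∏ k ∈ S₁, (1 - x k)) * ν.real (avoidAll A S₂)) := by
        rw [← mul_assoc]
        gcongr
        exact (hcond j).trans (mul_le_mul_of_nonneg_left hΓ (hx j).1)
    _ ≤ x j * ν.real (avoidAll A S) := by
        rw [← hS]
        exact mul_le_mul_of_nonneg_left (prod_one_sub_mul_le_measureReal_avoidAll_of_le hA
          (disjoint_filter_filter_not _ _ _) (fun k _ => (hx k).2) hstep) (hx j).1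

theorem prod_one_sub_mul_le_measureReal_avoidAll [DecidableEq κ]
    (hA : ∀ k, MeasurableSet (A k)) (hx : ∀ k, x k ∈ Set.Icc (0 : ℝ) 1)
    {Γ : κ → Finset κ}
    (hcond : ∀ j, ν.real (A j) ≤ x j * ∏ k ∈ Γ j, (1 - x k))
    (hdep : ∀ j S, j ∉ S → Disjoint S (Γ j) →
      ν.real (A j ∩ avoidAll A S) ≤ ν.real (A j) * ν.real (avoidAll A S))
    {T S : Finset κ} (hTS : Disjoint T S) :
    (∏ k ∈ T, (1 - x k)) * ν.real (avoidAll A S) ≤ ν.real (avoidAll A (T ∪ S)) :=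
  prod_one_sub_mul_le_measureReal_avoidAll_of_le hA hTS (fun k _ => (hx k).2)
    fun _ _ U _ haU => measureReal_inter_avoidAll_le hA hx hcond hdep U haU

end LocalLemma

theorem measureReal_cond_avoidAll_le {Ω κ : Type*} [MeasurableSpace Ω] {ν : Measure Ω}
    [IsProbabilityMeasure ν] [Fintype κ] [DecidableEq κ] {A : κ → Set Ω} {x : κ → ℝ}
    (hA : ∀ k, MeasurableSet (A k)) (hx : ∀ k, x k ∈ Set.Ico (0 : ℝ) 1)
    {Γ : κ → Finset κ}
    (hcond : ∀ j, ν.real (A j) ≤ x j * ∏ k ∈ Γ j, (1 - x k))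
    (hdep : ∀ j S, j ∉ S → Disjoint S (Γ j) →
      ν.real (A j ∩ avoidAll A S) ≤ ν.real (A j) * ν.real (avoidAll A S))
    (B : Set Ω) (ΓB : Finset κ)
    (hB : ν.real (B ∩ avoidAll A ΓBᶜ) ≤ ν.real B * ν.real (avoidAll A ΓBᶜ)) :
    (ν[|avoidAll A univ] B).toReal ≤ ν.real B * ∏ k ∈ ΓB, (1 - x k)⁻¹ := by
  have hx' : ∀ k, x k ∈ Set.Icc (0 : ℝ) 1 := fun k => Set.Ico_subset_Icc_self (hx k)
  have hprod_pos : ∀ T : Finset κ, 0 < ∏ k ∈ T, (1 - x k) :=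
    fun T => prod_pos fun k _ => sub_pos.2 (hx k).2
  have hlower :
      (∏ k ∈ ΓB, (1 - x k)) * ν.real (avoidAll A ΓBᶜ) ≤ ν.real (avoidAll A univ) := by
    simpa using prod_one_sub_mul_le_measureReal_avoidAll hA hx' hcond hdep
      (disjoint_compl_right (a := ΓB))
  have hpos : 0 < ν.real (avoidAll A univ) := by
    have := prod_one_sub_mul_le_measureReal_avoidAll hA hx' hcond hdep
      (disjoint_empty_right univ)
    simp only [avoidAll_empty, probReal_univ, mul_one, union_empty] at this
    exact (hprod_pos univ).trans_le this
  rw [cond_apply (measurableSet_avoidAll hA univ), ENNReal.toReal_mul, ENNReal.toReal_inv,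
    ← measureReal_def, ← measureReal_def, Set.inter_comm, prod_inv_distrib,
    inv_mul_eq_div, ← div_eq_mul_inv, div_le_div_iff₀ hpos (hprod_pos ΓB)]
  have hinter : ν.real (B ∩ avoidAll A univ) ≤ ν.real B * ν.real (avoidAll A ΓBᶜ) :=
    (measureReal_mono (Set.inter_subset_inter_right _ (avoidAll_anti A (subset_univ _)))).trans hB
  calc ν.real (B ∩ avoidAll A univ) * ∏ k ∈ ΓB, (1 - x k)
      ≤ ν.real B * ν.real (avoidAll A ΓBᶜ) * ∏ k ∈ ΓB, (1 - x k) :=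
        mul_le_mul_of_nonneg_right hinter (hprod_pos ΓB).le
    _ ≤ ν.real B * ν.real (avoidAll A univ) := by
        rw [mul_assoc, mul_comm (ν.real (avoidAll A ΓBᶜ))]
        exact mul_le_mul_of_nonneg_left hlower measureReal_nonneg

section VariableModel

variable {ι : Type*} {α : ι → Type*} [∀ i, MeasurableSpace (α i)]

lemma measurableSet_of_comap_restrict {s : Finset ι} {E : Set (∀ i, α i)}
    (hE : MeasurableSet[MeasurableSpace.comap s.restrict MeasurableSpace.pi] E) :
    MeasurableSet E :=
  s.measurable_restrict.comap_le _ hE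

lemma comap_restrict_mono {s t : Finset ι} (hst : s ⊆ t) :
    MeasurableSpace.comap (s.restrict (π := α)) MeasurableSpace.pi ≤
      MeasurableSpace.comap t.restrict MeasurableSpace.pi := by
  rw [← restrict₂_comp_restrict hst, ← MeasurableSpace.comap_comp]
  exact MeasurableSpace.comap_mono (measurable_restrict₂ hst).comap_le

lemma measurableSet_comap_avoidAll [DecidableEq ι] {κ : Type*} {A : κ → Set (∀ i, α i)}
    {vbl : κ → Finset ι}
    (hA : ∀ k, MeasurableSet[MeasurableSpace.comap (vbl k).restrict MeasurableSpace.pi] (A k))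
    (S : Finset κ) :
    MeasurableSet[MeasurableSpace.comap (S.biUnion vbl).restrict MeasurableSpace.pi]
      (avoidAll A S) :=
  S.measurableSet_biInter fun k hk =>
    (comap_restrict_mono (subset_biUnion_of_mem vbl hk) _ (hA k)).compl

variable [Fintype ι] (μ : ∀ i, Measure (α i)) [∀ i, IsProbabilityMeasure (μ i)]

lemma measureReal_pi_inter_of_disjoint {s t : Finset ι} (hst : Disjoint s t)
    {E F : Set (∀ i, α i)}
    (hE : MeasurableSet[MeasurableSpace.comap s.restrict MeasurableSpace.pi] E)
    (hF : MeasurableSet[MeasurableSpace.comap t.restrict MeasurableSpace.pi] F) :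
    (Measure.pi μ).real (E ∩ F) = (Measure.pi μ).real E * (Measure.pi μ).real F := by
  have hcoord : iIndepFun (fun i (ω : ∀ i, α i) => ω i) (Measure.pi μ) :=
    iIndepFun_pi (X := fun _ => id) fun _ => aemeasurable_id
  have hindep := hcoord.indepFun_finset s t hst measurable_pi_apply
  simp only [measureReal_def, hindep.meas_inter hE hF, ENNReal.toReal_mul]

lemma measureReal_pi_inter_avoidAll [DecidableEq ι] {κ : Type*} {A : κ → Set (∀ i, α i)}
    {vbl : κ → Finset ι}
    (hA : ∀ k, MeasurableSet[MeasurableSpace.comap (vbl k).restrict MeasurableSpace.pi] (A k))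
    {s : Finset ι} {E : Set (∀ i, α i)}
    (hE : MeasurableSet[MeasurableSpace.comap s.restrict MeasurableSpace.pi] E)
    {S : Finset κ} (hS : ∀ k ∈ S, Disjoint s (vbl k)) :
    (Measure.pi μ).real (E ∩ avoidAll A S) =
      (Measure.pi μ).real E * (Measure.pi μ).real (avoidAll A S) :=
  measureReal_pi_inter_of_disjoint μ ((disjoint_biUnion_right _ _ _).2 hS) hE
    (measurableSet_comap_avoidAll hA S)

end VariableModel

theorem stmt6 {n m : ℕ} (α : Fin n → Type*) [∀ i, MeasurableSpace (α i)]
    (μ : ∀ i, Measure (α i)) [∀ i, IsProbabilityMeasure (μ i)]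
    (A : Fin m → Set (∀ i, α i)) (vbl : Fin m → Finset (Fin n))
    (hmeas : ∀ j, MeasurableSet[MeasurableSpace.comap
      (fun (ω : ∀ i, α i) (i : vbl j) => ω i.1) MeasurableSpace.pi] (A j))
    (x : Fin m → ℝ) (hx : ∀ j, x j ∈ Set.Ioo (0:ℝ) 1)
    (hcond : ∀ j, ((Measure.pi μ) (A j)).toReal ≤
      x j * ∏ k ∈ Finset.univ.filter (fun k => k ≠ j ∧ (vbl j ∩ vbl k).Nonempty), (1 - x k))
    (B : Set (∀ i, α i)) (vblB : Finset (Fin n))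
    (hmeasB : MeasurableSet[MeasurableSpace.comap
      (fun (ω : ∀ i, α i) (i : vblB) => ω i.1) MeasurableSpace.pi] B) :
    ((Measure.pi μ)[|⋂ j, (A j)ᶜ] B).toReal ≤
      ((Measure.pi μ) B).toReal *
        ∏ k ∈ Finset.univ.filter (fun k => (vblB ∩ vbl k).Nonempty), (1 - x k)⁻¹ := by
  have hdisj : ∀ {s : Finset (Fin n)} {k}, ¬ (s ∩ vbl k).Nonempty → Disjoint s (vbl k) :=
    fun h => disjoint_iff_inter_eq_empty.2 (not_nonempty_iff_eq_empty.1 h)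
  have hdep : ∀ j S, j ∉ S →
      Disjoint S (univ.filter fun k => k ≠ j ∧ (vbl j ∩ vbl k).Nonempty) →
      (Measure.pi μ).real (A j ∩ avoidAll A S) ≤
        (Measure.pi μ).real (A j) * (Measure.pi μ).real (avoidAll A S) := by
    refine fun j S hj hS => (measureReal_pi_inter_avoidAll μ hmeas (hmeas j) fun k hk => ?_).le
    have hkj : k ≠ j := ne_of_mem_of_not_mem hk hj
    exact hdisj fun h => disjoint_left.1 hS hk (by simp [hkj, h])
  have hB := measureReal_pi_inter_avoidAll μ hmeas hmeasB
    (S := (univ.filter fun k => (vblB ∩ vbl k).Nonempty)ᶜ) fun k hk => hdisj (by simpa using hk)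
  have h := measureReal_cond_avoidAll_le (fun j => measurableSet_of_comap_restrict (hmeas j))
    (fun j => Set.Ioo_subset_Ico_self (hx j)) hcond hdep B _ hB.le
  rwa [avoidAll_univ] at h
end

section
/- In the symmetric setting of the Lovász Local Lemma with mutually independent variables, if every bad event A ∈ A satisfies Pr[A] ≤ p and every A shares a variable with at most d other events in A, and e·p·(d+1) ≤ 1, then there exists an assignment of the variables avoiding all events in A. -/
/-!
Asymmetric Lovász Local Lemma by the classical induction. For `j ∉ s` one shows
`μ (A j ∩ ⋂ k ∈ s, (A k)ᶜ) ≤ x j * μ (⋂ k ∈ s, (A k)ᶜ)` (the conditional bound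
`P[A j | avoid s] ≤ x j`, multiplied out so that no division by a possibly null event occurs).
`A j` is independent of the part of `s` outside its neighbourhood, and avoiding each neighbour
costs at most a factor `1 - x k` by the induction hypothesis; the bound
`μ (A j) ≤ x j * ∏ k ∈ N j, (1 - x k)` closes the induction. Peeling off all events then
gives `μ (⋂ k, (A k)ᶜ) ≥ ∏ k, (1 - x k) > 0`.
The symmetric case takes `x = 1 / (d + 2)` and uses `(1 + 1 / (d + 1)) ^ (d + 1) ≤ e`; in a
product space, events determined by disjoint sets of coordinates are independent.
-/

open MeasureTheory ProbabilityTheory Finset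

lemma ProbabilityTheory.IndepSet.measureReal_inter_eq_mul {Ω : Type*} [MeasurableSpace Ω]
    {μ : Measure Ω} {s t : Set Ω} (h : IndepSet s t μ) :
    μ.real (s ∩ t) = μ.real s * μ.real t := by
  simp only [Measure.real, h.measure_inter_eq_mul, ENNReal.toReal_mul]

lemma le_inv_mul_one_sub_inv_pow {p : ℝ} {d : ℕ} (h : Real.exp 1 * p * (d + 1) ≤ 1) :
    p ≤ (d + 2 : ℝ)⁻¹ * (1 - (d + 2 : ℝ)⁻¹) ^ d := by
  have he : (1 + ((d + 1 : ℕ) : ℝ)⁻¹) ^ (d + 1) ≤ Real.exp 1 := Real.one_add_inv_pow_le_exp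
  push_cast at he
  have hrhs : (d + 2 : ℝ)⁻¹ * (1 - (d + 2 : ℝ)⁻¹) ^ d =
      ((d + 1) * (1 + (d + 1 : ℝ)⁻¹) ^ (d + 1))⁻¹ := by
    rw [show 1 - (d + 2 : ℝ)⁻¹ = (d + 1) / (d + 2) by field_simp; ring,
      show 1 + (d + 1 : ℝ)⁻¹ = (d + 2) / (d + 1) by field_simp; ring,
      div_pow, div_pow, pow_succ]
    field_simp
    ring
  calc p ≤ ((d + 1) * Real.exp 1)⁻¹ := by
        rw [← mul_one (_⁻¹), le_inv_mul_iff₀ (by positivity)]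
        linarith
    _ ≤ _ := by
        rw [hrhs]
        gcongr

section AsymmetricLocalLemma

variable {Ω ι : Type*} [MeasurableSpace Ω] {μ : Measure Ω} [DecidableEq ι] {A : ι → Set Ω}

lemma measureReal_biInter_compl_insert [IsFiniteMeasure μ] {j : ι} (hA : MeasurableSet (A j))
    (s : Finset ι) :
    μ.real (⋂ k ∈ insert j s, (A k)ᶜ) =
      μ.real (⋂ k ∈ s, (A k)ᶜ) - μ.real (A j ∩ ⋂ k ∈ s, (A k)ᶜ) := by
  rw [set_biInter_insert, Set.inter_comm, ← Set.sdiff_eq, Set.inter_comm,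
    ← measureReal_inter_add_sdiff (μ := μ) (s := ⋂ k ∈ s, (A k)ᶜ) hA]
  ring

lemma one_sub_mul_le_measureReal_biInter_compl_insert [IsFiniteMeasure μ] {j : ι}
    (hA : MeasurableSet (A j)) {s : Finset ι} {x : ℝ}
    (h : μ.real (A j ∩ ⋂ k ∈ s, (A k)ᶜ) ≤ x * μ.real (⋂ k ∈ s, (A k)ᶜ)) :
    (1 - x) * μ.real (⋂ k ∈ s, (A k)ᶜ) ≤ μ.real (⋂ k ∈ insert j s, (A k)ᶜ) := by
  rw [measureReal_biInter_compl_insert hA]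
  linarith

lemma prod_one_sub_mul_le_measureReal_biInter_compl_union [IsFiniteMeasure μ]
    (hA : ∀ k, MeasurableSet (A k)) {x : ι → ℝ} (hx : ∀ k, x k ≤ 1) (u t : Finset ι)
    (h : ∀ k ∈ t, ∀ v ⊆ t, k ∉ v →
      μ.real (A k ∩ ⋂ i ∈ u ∪ v, (A i)ᶜ) ≤
        x k * μ.real (⋂ i ∈ u ∪ v, (A i)ᶜ)) :
    (∏ k ∈ t, (1 - x k)) * μ.real (⋂ k ∈ u, (A k)ᶜ) ≤
      μ.real (⋂ k ∈ u ∪ t, (A k)ᶜ) := by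
  induction t using Finset.induction with
  | empty => simp
  | insert k t hk ih =>
    have ih := ih fun i hi v hv ↦
      h i (mem_insert_of_mem hi) v (hv.trans (subset_insert k t))
    rw [prod_insert hk, mul_assoc, union_insert]
    calc (1 - x k) * ((∏ i ∈ t, (1 - x i)) * μ.real (⋂ i ∈ u, (A i)ᶜ))
        ≤ (1 - x k) * μ.real (⋂ i ∈ u ∪ t, (A i)ᶜ) :=
          mul_le_mul_of_nonneg_left ih (sub_nonneg.2 (hx k))
      _ ≤ _ := one_sub_mul_le_measureReal_biInter_compl_insert (hA k)
          (h k (mem_insert_self k t) t (subset_insert k t) hk)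

variable [IsProbabilityMeasure μ] {N : ι → Finset ι} {x : ι → ℝ}

lemma measureReal_inter_biInter_compl_le (hA : ∀ k, MeasurableSet (A k))
    (hindep : ∀ j s, j ∉ s → Disjoint s (N j) → IndepSet (A j) (⋂ k ∈ s, (A k)ᶜ) μ)
    (hx0 : ∀ k, 0 ≤ x k) (hx1 : ∀ k, x k ≤ 1)
    (hA_le : ∀ j, μ.real (A j) ≤ x j * ∏ k ∈ N j, (1 - x k)) (s : Finset ι) {j : ι}
    (hj : j ∉ s) :
    μ.real (A j ∩ ⋂ k ∈ s, (A k)ᶜ) ≤ x j * μ.real (⋂ k ∈ s, (A k)ᶜ) := by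
  induction s using Finset.strongInduction generalizing j with
  | H s ih =>
  -- Split `s` into the neighbours of `j`, which are peeled off one at a time using the
  -- induction hypothesis, and the rest, of which `A j` is independent.
  set near := s.filter (· ∈ N j)
  set far := s.filter (· ∉ N j)
  have hfar : far ∪ near = s := by rw [union_comm, filter_union_filter_not_eq]
  have hpeel : (∏ k ∈ near, (1 - x k)) * μ.real (⋂ k ∈ far, (A k)ᶜ) ≤
      μ.real (⋂ k ∈ s, (A k)ᶜ) := by
    rw [← hfar]
    refine prod_one_sub_mul_le_measureReal_biInter_compl_union hA hx1 far near
      fun k hk v hv hkv ↦ ?_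
    have hk_far : k ∉ far := fun h ↦ (mem_filter.1 h).2 (mem_filter.1 hk).2
    have hk_notMem : k ∉ far ∪ v := by simp [hk_far, hkv]
    have hsub : far ∪ v ⊆ s := union_subset (filter_subset _ s) (hv.trans (filter_subset _ s))
    exact ih _ ((ssubset_iff_of_subset hsub).2 ⟨k, (mem_filter.1 hk).1, hk_notMem⟩) hk_notMem
  have hprod : ∏ k ∈ N j, (1 - x k) ≤ ∏ k ∈ near, (1 - x k) :=
    prod_le_prod_of_subset_of_le_one (fun k hk ↦ (mem_filter.1 hk).2)
      (fun k _ ↦ sub_nonneg.2 (hx1 k)) (fun k _ _ ↦ by linarith [hx0 k])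
  calc μ.real (A j ∩ ⋂ k ∈ s, (A k)ᶜ)
      ≤ μ.real (A j ∩ ⋂ k ∈ far, (A k)ᶜ) :=
        measureReal_mono (Set.inter_subset_inter_right _
          (Set.biInter_subset_biInter_left (filter_subset _ s)))
    _ = μ.real (A j) * μ.real (⋂ k ∈ far, (A k)ᶜ) :=
        (hindep j far (fun h ↦ hj (mem_filter.1 h).1)
          (disjoint_left.2 fun _ hk ↦ (mem_filter.1 hk).2)).measureReal_inter_eq_mul
    _ ≤ x j * (∏ k ∈ near, (1 - x k)) * μ.real (⋂ k ∈ far, (A k)ᶜ) := by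
        gcongr
        exact (hA_le j).trans (mul_le_mul_of_nonneg_left hprod (hx0 j))
    _ ≤ x j * μ.real (⋂ k ∈ s, (A k)ᶜ) := by
        rw [mul_assoc]
        exact mul_le_mul_of_nonneg_left hpeel (hx0 j)

lemma prod_one_sub_le_measureReal_biInter_compl (hA : ∀ k, MeasurableSet (A k))
    (hindep : ∀ j s, j ∉ s → Disjoint s (N j) → IndepSet (A j) (⋂ k ∈ s, (A k)ᶜ) μ)
    (hx0 : ∀ k, 0 ≤ x k) (hx1 : ∀ k, x k ≤ 1)
    (hA_le : ∀ j, μ.real (A j) ≤ x j * ∏ k ∈ N j, (1 - x k)) (s : Finset ι) :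
    ∏ k ∈ s, (1 - x k) ≤ μ.real (⋂ k ∈ s, (A k)ᶜ) := by
  simpa using prod_one_sub_mul_le_measureReal_biInter_compl_union hA hx1 ∅ s
    fun k _ v _ hkv ↦ measureReal_inter_biInter_compl_le hA hindep hx0 hx1 hA_le _ (by simpa)

theorem exists_forall_notMem_of_lovasz_local_lemma [Fintype ι]
    (hA : ∀ k, MeasurableSet (A k))
    (hindep : ∀ j s, j ∉ s → Disjoint s (N j) → IndepSet (A j) (⋂ k ∈ s, (A k)ᶜ) μ)
    (hx0 : ∀ k, 0 ≤ x k) (hx1 : ∀ k, x k < 1)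
    (hA_le : ∀ j, μ.real (A j) ≤ x j * ∏ k ∈ N j, (1 - x k)) :
    ∃ ω, ∀ j, ω ∉ A j := by
  have hpos : 0 < μ.real (⋂ k ∈ univ, (A k)ᶜ) :=
    (prod_pos fun k _ ↦ sub_pos.2 (hx1 k)).trans_le
      (prod_one_sub_le_measureReal_biInter_compl hA hindep hx0 (fun k ↦ (hx1 k).le) hA_le univ)
  obtain ⟨ω, hω⟩ := nonempty_of_measure_ne_zero ((measureReal_ne_zero_iff).1 hpos.ne')
  exact ⟨ω, fun j ↦ Set.mem_iInter₂.1 hω j (mem_univ j)⟩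

theorem exists_forall_notMem_of_symmetric_lovasz_local_lemma [Fintype ι]
    (hA : ∀ k, MeasurableSet (A k))
    (hindep : ∀ j s, j ∉ s → Disjoint s (N j) → IndepSet (A j) (⋂ k ∈ s, (A k)ᶜ) μ)
    {p : ℝ} {d : ℕ} (hA_le : ∀ j, μ.real (A j) ≤ p) (hN : ∀ j, #(N j) ≤ d)
    (h : Real.exp 1 * p * (d + 1) ≤ 1) :
    ∃ ω, ∀ j, ω ∉ A j := by
  -- `x = 1 / (d + 2)` rather than the textbook `1 / (d + 1)`, so that `1 - x > 0` also
  -- when `d = 0`.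
  set x : ℝ := (d + 2 : ℝ)⁻¹
  have hx0 : 0 ≤ x := by positivity
  have hx1 : x < 1 := inv_lt_one_of_one_lt₀ (by linarith [d.cast_nonneg (α := ℝ)])
  refine exists_forall_notMem_of_lovasz_local_lemma (N := N) (x := fun _ ↦ x) hA hindep
    (fun _ ↦ hx0) (fun _ ↦ hx1) fun j ↦ ?_
  calc μ.real (A j) ≤ x * (1 - x) ^ d := (hA_le j).trans (le_inv_mul_one_sub_inv_pow h)
    _ ≤ x * ∏ k ∈ N j, (1 - x) := by
      rw [prod_const]
      exact mul_le_mul_of_nonneg_left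
        (pow_le_pow_of_le_one (by linarith) (by linarith) (hN j)) hx0

end AsymmetricLocalLemma

lemma indepSet_pi_of_disjoint {ι : Type*} [Fintype ι] {α : ι → Type*}
    [∀ i, MeasurableSpace (α i)] (μ : ∀ i, Measure (α i))
    [∀ i, IsProbabilityMeasure (μ i)] {S T : Finset ι} (hST : Disjoint S T)
    {B C : Set (∀ i, α i)}
    (hB : MeasurableSet[Filtration.piFinset S] B) (hC : MeasurableSet[Filtration.piFinset T] C) :
    IndepSet B C (Measure.pi μ) := by
  have hcoord : iIndepFun (fun i (ω : ∀ i, α i) ↦ ω i) (Measure.pi μ) :=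
    iIndepFun_pi (X := fun _ ↦ id) fun _ ↦ aemeasurable_id
  exact ((IndepFun_iff_Indep _ _ _).1
    (hcoord.indepFun_finset S T hST measurable_pi_apply)).indepSet_of_measurableSet hB hC

theorem stmt7 {n m : ℕ} (α : Fin n → Type*) [∀ i, MeasurableSpace (α i)]
    (μ : ∀ i, Measure (α i)) [∀ i, IsProbabilityMeasure (μ i)]
    (A : Fin m → Set (∀ i, α i)) (vbl : Fin m → Finset (Fin n))
    (hmeas : ∀ j, MeasurableSet[MeasurableSpace.comap
      (fun (ω : ∀ i, α i) (i : vbl j) => ω i.1) MeasurableSpace.pi] (A j))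
    (p : ℝ) (d : ℕ)
    (hp : ∀ j, ((Measure.pi μ) (A j)).toReal ≤ p)
    (hd : ∀ j, (Finset.univ.filter (fun k => k ≠ j ∧ (vbl j ∩ vbl k).Nonempty)).card ≤ d)
    (hlll : Real.exp 1 * p * (d + 1) ≤ 1) :
    ∃ ω : ∀ i, α i, ∀ j, ω ∉ A j := by
  have hA : ∀ j, MeasurableSet[Filtration.piFinset (vbl j)] (A j) := hmeas
  refine exists_forall_notMem_of_symmetric_lovasz_local_lemma
    (fun j ↦ Filtration.piFinset.le _ _ (hA j)) (fun j s hj hs ↦ ?_) hp hd hlll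
  refine indepSet_pi_of_disjoint μ (T := s.biUnion vbl) ?_ (hA j)
    (measurableSet_biInter s fun k hk ↦ (Filtration.piFinset.mono (subset_biUnion_of_mem vbl hk)
      _ (hA k)).compl)
  refine (disjoint_biUnion_right _ _ _).2 fun k hk ↦ disjoint_iff_inter_eq_empty.2 ?_
  by_contra hne
  exact disjoint_left.1 hs hk
    (mem_filter.2 ⟨mem_univ k, fun hkj ↦ hj (hkj ▸ hk), nonempty_iff_ne_empty.2 hne⟩)
end

section
/- If every clause of a k-CNF formula (each clause having exactly k distinct variables) shares a variable with at most 2^k/e − 1 other clauses, then the formula is satisfiable. -/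
open scoped Classical

/-- A clause with exactly `k` distinct literals over Boolean variables indexed by `V`. -/
structure KClause (k : ℕ) (V : Type*) where
  vars : Fin k → V
  inj : Function.Injective vars
  sign : Fin k → Bool

/-!
The symmetric Lovász Local Lemma, proved by counting outcomes of a finite uniform space. Let
`N S` be the number of outcomes avoiding every bad event indexed by `S`. By strong induction on
`S`, `(1 - x) N S ≤ N (insert j S)`: split `S` into the neighbours `E` of `j` and the rest `R`;
independence bounds the outcomes of `R` that hit event `j` by `p N R`, and the induction hypothesis,
applied along the insertion of the elements of `E`, gives `(1 - x) ^ #E N R ≤ N S`. Hence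
`N univ ≥ (1 - x) ^ n N ∅ > 0`.

For k-SAT the bad event of a clause is that all its `k` literals are false; given any condition
on the variables outside the clause it has probability exactly `2⁻ᵏ`. Only the finitely many
variables occurring in the formula matter.
-/

open Finset

section LovaszLocalLemma

variable {Ω ι : Type*} [Fintype Ω] [DecidableEq ι]

lemma pow_mul_le_of_forall_insert {f : Finset ι → ℝ} {c : ℝ} (hc : 0 ≤ c) {R : Finset ι} :
    ∀ E : Finset ι, Disjoint R E →
      (∀ T ⊂ R ∪ E, ∀ j ∈ R ∪ E, j ∉ T → c * f T ≤ f (insert j T)) →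
      c ^ #E * f R ≤ f (R ∪ E) := by
  intro E
  induction E using Finset.induction_on with
  | empty => simp
  | insert a E ha ih =>
    intro hdisj hgrow
    rw [disjoint_insert_right] at hdisj
    have haRE : a ∉ R ∪ E := by simp [hdisj.1, ha]
    have hsub : R ∪ E ⊂ R ∪ insert a E := by
      rw [union_insert]; exact ssubset_insert haRE
    calc c ^ #(insert a E) * f R = c * (c ^ #E * f R) := by
          rw [card_insert_of_notMem ha, pow_succ]; ring
      _ ≤ c * f (R ∪ E) := by
          gcongr
          exact ih hdisj.2 fun T hT j hj => hgrow T (hT.trans hsub) j (hsub.subset hj)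
      _ ≤ f (R ∪ insert a E) := by
          rw [union_insert]
          exact hgrow _ (union_insert a R E ▸ hsub) a (by simp) haRE

variable [Fintype ι]

noncomputable def avoidCount (A : ι → Ω → Prop) (S : Finset ι) : ℕ := #{ω | ∀ i ∈ S, ¬A i ω}

lemma avoidCount_insert_add (A : ι → Ω → Prop) (S : Finset ι) (j : ι) :
    avoidCount A (insert j S) + #{ω | (∀ i ∈ S, ¬A i ω) ∧ A j ω} = avoidCount A S := by
  have := card_filter_add_card_filter_not (s := ({ω | ∀ i ∈ S, ¬A i ω} : Finset Ω))
    (fun ω => ¬A j ω)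
  simp only [filter_filter, not_not] at this
  rw [avoidCount, avoidCount, ← this]
  congr 2
  ext ω
  simp [and_comm]

variable {A : ι → Ω → Prop} {Γ : ι → Finset ι} {p x : ℝ}

lemma one_sub_mul_avoidCount_le_insert
    (hindep : ∀ j S, j ∉ S → Disjoint S (Γ j) →
      (#{ω | (∀ i ∈ S, ¬A i ω) ∧ A j ω} : ℝ) ≤ p * avoidCount A S)
    (hp : ∀ j, p ≤ x * (1 - x) ^ #(Γ j)) (hx₀ : 0 ≤ x) (hx₁ : x ≤ 1) (S : Finset ι) :
    ∀ j ∉ S, (1 - x) * avoidCount A S ≤ avoidCount A (insert j S) := by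
  induction S using Finset.strongInduction with
  | H S ih =>
  intro j hj
  set R := S \ Γ j
  set E := S ∩ Γ j
  have hRE : R ∪ E = S := sdiff_union_inter S (Γ j)
  have hchain : (1 - x) ^ #E * avoidCount A R ≤ avoidCount A S := by
    have := pow_mul_le_of_forall_insert (f := fun T => (avoidCount A T : ℝ))
      (sub_nonneg.2 hx₁) E (disjoint_sdiff_inter S (Γ j))
      (by rw [hRE]; exact fun T hT i _ hi => ih T hT i hi)
    rwa [hRE] at this
  have hmono : #{ω | (∀ i ∈ S, ¬A i ω) ∧ A j ω} ≤ #{ω | (∀ i ∈ R, ¬A i ω) ∧ A j ω} :=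
    card_le_card fun ω hω => by
      simp only [mem_filter, mem_univ, true_and] at hω ⊢
      exact ⟨fun i hi => hω.1 i (sdiff_subset hi), hω.2⟩
  have hpE : p ≤ x * (1 - x) ^ #E :=
    (hp j).trans (mul_le_mul_of_nonneg_left (pow_le_pow_of_le_one (sub_nonneg.2 hx₁)
      (by linarith) (card_le_card inter_subset_right)) hx₀)
  have hbad : (#{ω | (∀ i ∈ S, ¬A i ω) ∧ A j ω} : ℝ) ≤ x * avoidCount A S :=
    calc (#{ω | (∀ i ∈ S, ¬A i ω) ∧ A j ω} : ℝ)
        ≤ #{ω | (∀ i ∈ R, ¬A i ω) ∧ A j ω} := by exact_mod_cast hmono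
      _ ≤ p * avoidCount A R := hindep j R (fun h => hj (sdiff_subset h)) sdiff_disjoint
      _ ≤ x * (1 - x) ^ #E * avoidCount A R := by gcongr
      _ ≤ x * avoidCount A S := by rw [mul_assoc]; gcongr
  have hsplit : (avoidCount A (insert j S) : ℝ) + #{ω | (∀ i ∈ S, ¬A i ω) ∧ A j ω}
      = avoidCount A S := by exact_mod_cast avoidCount_insert_add A S j
  linarith

theorem lovasz_local_lemma [Nonempty Ω]
    (hindep : ∀ j S, j ∉ S → Disjoint S (Γ j) →
      (#{ω | (∀ i ∈ S, ¬A i ω) ∧ A j ω} : ℝ) ≤ p * avoidCount A S)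
    (hp : ∀ j, p ≤ x * (1 - x) ^ #(Γ j)) (hx₀ : 0 ≤ x) (hx₁ : x < 1) :
    ∃ ω, ∀ i, ¬A i ω := by
  have hstep := one_sub_mul_avoidCount_le_insert hindep hp hx₀ hx₁.le
  have hgrow : (1 - x) ^ #(univ : Finset ι) * avoidCount A ∅ ≤ avoidCount A (∅ ∪ univ) :=
    pow_mul_le_of_forall_insert (f := fun T => (avoidCount A T : ℝ)) (sub_nonneg.2 hx₁.le)
      univ (disjoint_empty_left _) fun T _ j _ hj => hstep T j hj
  have hpos : (0 : ℝ) < avoidCount A univ := by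
    have : (0 : ℝ) < (1 - x) ^ #(univ : Finset ι) * avoidCount A ∅ := by
      simp only [avoidCount, notMem_empty, IsEmpty.forall_iff, implies_true, filter_true,
        card_univ]
      have := sub_pos.2 hx₁
      positivity
    simpa using this.trans_le hgrow
  obtain ⟨ω, hω⟩ := card_pos.1 (Nat.cast_pos.1 hpos)
  exact ⟨ω, fun i => (mem_filter.1 hω).2 i (mem_univ i)⟩

lemma inv_mul_exp_one_le (d : ℕ) :
    (((d : ℝ) + 1) * Real.exp 1)⁻¹ ≤ ((d : ℝ) + 2)⁻¹ * (1 - ((d : ℝ) + 2)⁻¹) ^ d := by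
  set y : ℝ := 1 + ((d : ℝ) + 1)⁻¹
  have hy : 1 - ((d : ℝ) + 2)⁻¹ = y⁻¹ := by simp only [y]; field_simp; ring
  have hd2 : ((d : ℝ) + 2)⁻¹ = (((d : ℝ) + 1) * y)⁻¹ := by simp only [y]; field_simp; ring
  have he : y ^ (d + 1) ≤ Real.exp 1 := by
    simpa [y] using Real.one_add_inv_pow_le_exp (n := d + 1)
  rw [hy, hd2, inv_pow, ← mul_inv, mul_assoc, ← pow_succ']
  gcongr

theorem lovasz_local_lemma_symm [Nonempty Ω] {d : ℕ} (hΓ : ∀ j, #(Γ j) ≤ d)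
    (hindep : ∀ j S, j ∉ S → Disjoint S (Γ j) →
      (#{ω | (∀ i ∈ S, ¬A i ω) ∧ A j ω} : ℝ) ≤ p * avoidCount A S)
    (hp : Real.exp 1 * p * (d + 1) ≤ 1) :
    ∃ ω, ∀ i, ¬A i ω := by
  -- `x = 1 / (d + 2)` rather than the usual `1 / (d + 1)`, so that `x < 1` also when `d = 0`.
  have hx₀ : (0 : ℝ) ≤ ((d : ℝ) + 2)⁻¹ := by positivity
  have hx₁ : ((d : ℝ) + 2)⁻¹ < 1 := inv_lt_one_of_one_lt₀ (by linarith [d.cast_nonneg (α := ℝ)])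
  refine lovasz_local_lemma hindep (fun j => ?_) hx₀ hx₁
  calc p ≤ (((d : ℝ) + 1) * Real.exp 1)⁻¹ := by
        rw [← one_div, le_div_iff₀ (by positivity)]; linarith
    _ ≤ ((d : ℝ) + 2)⁻¹ * (1 - ((d : ℝ) + 2)⁻¹) ^ d := inv_mul_exp_one_le d
    _ ≤ _ := mul_le_mul_of_nonneg_left
        (pow_le_pow_of_le_one (sub_nonneg.2 hx₁.le) (by linarith) (hΓ j)) hx₀

end LovaszLocalLemma

lemma card_filter_and_eqOn_mul_card_pow {α β : Type*} [Fintype α] [Fintype β] [DecidableEq β]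
    (T : Finset α) (b : α → β) {Q : (α → β) → Prop} [DecidablePred Q]
    (hQ : ∀ σ τ, (∀ a ∉ T, σ a = τ a) → Q σ → Q τ) :
    #{σ | Q σ ∧ ∀ a ∈ T, σ a = b a} * Fintype.card β ^ #T = #{σ | Q σ} := by
  rw [← Fintype.card_coe T, ← Fintype.card_fun, ← card_univ, ← card_product]
  refine card_nbij' (fun σc a => if h : a ∈ T then σc.2 ⟨a, h⟩ else σc.1 a)
    (fun τ => (T.piecewise b τ, fun a => τ a)) ?_ ?_ ?_ ?_
  · rintro ⟨σ, c⟩ hσ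
    simp only [mem_coe, mem_product, mem_filter, mem_univ, true_and, and_true] at hσ ⊢
    exact hQ σ _ (fun a ha => by simp [ha]) hσ.1
  · intro τ hτ
    simp only [mem_coe, mem_product, mem_filter, mem_univ, true_and, and_true] at hτ ⊢
    exact ⟨hQ τ _ (fun a ha => by simp [ha]) hτ, fun a ha => by simp [ha]⟩
  · rintro ⟨σ, c⟩ hσ
    simp only [mem_coe, mem_product, mem_filter, mem_univ, true_and, and_true] at hσ
    ext a
    · by_cases ha : a ∈ T <;> simp [ha, hσ.2]
    · simp
  · intro τ _
    ext a
    by_cases ha : a ∈ T <;> simp [ha]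

namespace KClause

variable {k : ℕ} {V : Type*}

def IsFalsifiedBy (c : KClause k V) (σ : V → Bool) : Prop := ∀ i, σ (c.vars i) ≠ c.sign i

noncomputable def neighbours {ι : Type*} [Fintype ι] [DecidableEq ι] (C : ι → KClause k V)
    (j : ι) : Finset ι :=
  Finset.univ.filter fun j' => j' ≠ j ∧ ∃ i i', (C j').vars i' = (C j).vars i

lemma card_filter_and_isFalsifiedBy_mul [Fintype V] (c : KClause k V) {Q : (V → Bool) → Prop}
    [DecidablePred Q] (hQ : ∀ σ τ, (∀ v, (∀ i, c.vars i ≠ v) → σ v = τ v) → Q σ → Q τ) :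
    #{σ | Q σ ∧ c.IsFalsifiedBy σ} * 2 ^ k = #{σ | Q σ} := by
  set b := Function.extend c.vars (fun i => !c.sign i) fun _ => false
  have hfalse : ∀ σ, c.IsFalsifiedBy σ ↔ ∀ v ∈ univ.image c.vars, σ v = b v := by
    simp [IsFalsifiedBy, b, c.inj.extend_apply, Bool.eq_not_iff]
  have hT : #(univ.image c.vars) = k := by
    rw [card_image_of_injective _ c.inj, card_univ, Fintype.card_fin]
  have := card_filter_and_eqOn_mul_card_pow (univ.image c.vars) b
    fun σ τ h => hQ σ τ fun v hv => h v (by simpa using hv)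
  rw [hT, Fintype.card_bool] at this
  simp only [hfalse]
  exact this

lemma vars_ne_of_notMem_neighbours {ι : Type*} [Fintype ι] [DecidableEq ι]
    {C : ι → KClause k V} {i j : ι} (hij : i ≠ j) (hi : i ∉ neighbours C j) (l l' : Fin k) :
    (C j).vars l' ≠ (C i).vars l :=
  fun h => hi (mem_filter.2 ⟨mem_univ _, hij, l', l, h.symm⟩)

lemma card_filter_and_isFalsifiedBy_mul_of_disjoint [Fintype V] {ι : Type*} [Fintype ι]
    [DecidableEq ι] (C : ι → KClause k V) {j : ι} {S : Finset ι} (hj : j ∉ S)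
    (hS : Disjoint S (neighbours C j)) :
    #{σ | (∀ i ∈ S, ¬(C i).IsFalsifiedBy σ) ∧ (C j).IsFalsifiedBy σ} * 2 ^ k
      = #{σ | ∀ i ∈ S, ¬(C i).IsFalsifiedBy σ} := by
  refine (C j).card_filter_and_isFalsifiedBy_mul fun σ τ hστ hσ i hi hτ => ?_
  obtain ⟨l, hl⟩ := not_forall_not.1 (hσ i hi)
  refine hτ l (hστ _ (fun l' => ?_) ▸ hl)
  exact vars_ne_of_notMem_neighbours (ne_of_mem_of_not_mem hi hj) (disjoint_left.1 hS hi) l l'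

theorem exists_forall_not_isFalsifiedBy_of_fintype [Fintype V] {ι : Type*} [Fintype ι]
    [DecidableEq ι] (C : ι → KClause k V) {d : ℕ} (hd : ∀ j, #(neighbours C j) ≤ d)
    (hk : Real.exp 1 * (d + 1) ≤ 2 ^ k) :
    ∃ σ : V → Bool, ∀ j, ¬(C j).IsFalsifiedBy σ := by
  refine lovasz_local_lemma_symm (p := (2 ^ k)⁻¹) hd (fun j S hj hS => le_of_eq ?_) ?_
  · rw [avoidCount, ← card_filter_and_isFalsifiedBy_mul_of_disjoint C hj hS]
    push_cast
    field_simp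
  · rw [mul_right_comm, ← div_eq_mul_inv, div_le_one (by positivity)]
    exact hk

def codRestrict (c : KClause k V) (p : V → Prop) (h : ∀ i, p (c.vars i)) :
    KClause k (Subtype p) where
  vars i := ⟨c.vars i, h i⟩
  inj _ _ hij := c.inj (congrArg Subtype.val hij)
  sign := c.sign

theorem exists_forall_not_isFalsifiedBy {ι : Type*} [Fintype ι] [DecidableEq ι]
    (C : ι → KClause k V) {d : ℕ} (hd : ∀ j, #(neighbours C j) ≤ d)
    (hk : Real.exp 1 * (d + 1) ≤ 2 ^ k) :
    ∃ σ : V → Bool, ∀ j, ¬(C j).IsFalsifiedBy σ := by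
  set U : Finset V := univ.biUnion fun j => univ.image (C j).vars
  have hU : ∀ j i, (C j).vars i ∈ U := fun j i =>
    mem_biUnion.2 ⟨j, mem_univ _, mem_image_of_mem _ (mem_univ i)⟩
  have hd' : ∀ j, #(neighbours (fun j => (C j).codRestrict (· ∈ U) (hU j)) j) ≤ d := by
    simpa only [neighbours, codRestrict, Subtype.ext_iff] using hd
  obtain ⟨σ, hσ⟩ := exists_forall_not_isFalsifiedBy_of_fintype _ hd' hk
  refine ⟨fun v => if h : v ∈ U then σ ⟨v, h⟩ else false, fun j hj => hσ j fun i => ?_⟩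
  simpa [codRestrict, hU j i] using hj i

end KClause

theorem stmt9 {k m : ℕ} {V : Type*} (C : Fin m → KClause k V)
    (hshare : ∀ j, ((Finset.univ.filter fun j' =>
        j' ≠ j ∧ ∃ i i', (C j').vars i' = (C j).vars i).card : ℝ)
      ≤ 2 ^ k / Real.exp 1 - 1) :
    ∃ σ : V → Bool, ∀ j, ∃ i, σ ((C j).vars i) = (C j).sign i := by
  rcases isEmpty_or_nonempty (Fin m) with hm | ⟨⟨j₀⟩⟩
  · exact ⟨fun _ => false, fun j => isEmptyElim j⟩
  set d := ⌊2 ^ k / Real.exp 1 - 1⌋₊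
  have hd : ∀ j, #(KClause.neighbours C j) ≤ d := fun j => Nat.le_floor (hshare j)
  have hk : Real.exp 1 * (d + 1) ≤ 2 ^ k := by
    have := Nat.floor_le ((Nat.cast_nonneg _).trans (hshare j₀))
    rw [← le_div_iff₀' (Real.exp_pos 1)]
    linarith
  obtain ⟨σ, hσ⟩ := KClause.exists_forall_not_isFalsifiedBy C hd hk
  exact ⟨σ, fun j => by simpa [KClause.IsFalsifiedBy] using hσ j⟩
end

section
/- Consider a finite collection of n finite sets and a positive integer q. Define a graph on the sets where two sets are adjacent iff they intersect; a subcollection is connected if its induced subgraph is connected. If for every i with 1 ≤ i ≤ n, the union of every connected subcollection of i sets contains at least i·q elements, then there is a system of pairwise disjoint subsets, one q-element subset chosen from each set. -/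
open SimpleGraph

lemma key_biUnion {ι : Type*} [DecidableEq ι] {n q : ℕ}
    (S : Fin n → Finset ι)
    (hhall : ∀ T : Finset (Fin n), T.Nonempty →
      ((SimpleGraph.fromRel fun a b => ((S a) ∩ (S b)).Nonempty).induce
        (T : Set (Fin n))).Connected →
      T.card * q ≤ (T.biUnion S).card) :
    ∀ T : Finset (Fin n), T.card * q ≤ (T.biUnion S).card := by
  classical
  set G := SimpleGraph.fromRel fun a b => ((S a) ∩ (S b)).Nonempty with hG
  intro T
  induction T using Finset.strongInductionOn with
  | _ T ih =>
  rcases T.eq_empty_or_nonempty with rfl | ⟨i, hi⟩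
  · simp
  set C : Finset (Fin n) :=
    T.filter (fun j => ∃ hj : j ∈ T,
      (G.induce (T : Set (Fin n))).Reachable ⟨i, hi⟩ ⟨j, hj⟩) with hC
  have hCT : C ⊆ T := Finset.filter_subset _ _
  have hiC : i ∈ C := by
    rw [hC, Finset.mem_filter]
    exact ⟨hi, hi, SimpleGraph.Reachable.refl _⟩
  by_cases hall : C = T
  · -- connected case
    apply hhall T ⟨i, hi⟩
    rw [SimpleGraph.connected_iff]
    refine ⟨?_, ⟨⟨i, hi⟩⟩⟩
    intro x y
    have hx : (x : Fin n) ∈ C := by rw [hall]; exact_mod_cast x.2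
    have hy : (y : Fin n) ∈ C := by rw [hall]; exact_mod_cast y.2
    rw [hC, Finset.mem_filter] at hx hy
    obtain ⟨_, hx1, hx2⟩ := hx
    obtain ⟨_, hy1, hy2⟩ := hy
    have hx2' : (G.induce (T : Set (Fin n))).Reachable ⟨i, hi⟩ x := hx2
    have hy2' : (G.induce (T : Set (Fin n))).Reachable ⟨i, hi⟩ y := hy2
    exact hx2'.symm.trans hy2'
  · -- split into C and T \ C
    have hCssub : C ⊂ T := hCT.ssubset_of_ne hall
    have hdisj : ∀ j ∈ C, ∀ k ∈ T \ C, Disjoint (S j) (S k) := by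
      intro j hj k hk
      rw [Finset.mem_sdiff] at hk
      by_contra hnd
      have hne : j ≠ k := by rintro rfl; exact hk.2 hj
      have hint : ((S j) ∩ (S k)).Nonempty := by
        rw [Finset.not_disjoint_iff] at hnd
        obtain ⟨x, hx1, hx2⟩ := hnd
        exact ⟨x, Finset.mem_inter.2 ⟨hx1, hx2⟩⟩
      have hadj : G.Adj j k := by
        rw [hG, SimpleGraph.fromRel_adj]
        exact ⟨hne, Or.inl hint⟩
      rw [hC, Finset.mem_filter] at hj
      obtain ⟨hjT, hjT', hreach⟩ := hj
      have hadj' : (G.induce (T : Set (Fin n))).Adj ⟨j, hjT'⟩ ⟨k, hk.1⟩ := hadj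
      have : k ∈ C := by
        rw [hC, Finset.mem_filter]
        exact ⟨hk.1, hk.1, hreach.trans hadj'.reachable⟩
      exact hk.2 this
    have hsplit : T.biUnion S = C.biUnion S ∪ (T \ C).biUnion S := by
      ext x
      simp only [Finset.mem_biUnion, Finset.mem_union, Finset.mem_sdiff]
      constructor
      · rintro ⟨j, hj, hx⟩
        by_cases h : j ∈ C
        · exact Or.inl ⟨j, h, hx⟩
        · exact Or.inr ⟨j, ⟨hj, h⟩, hx⟩
      · rintro (⟨j, hj, hx⟩ | ⟨j, hj, hx⟩)
        · exact ⟨j, hCT hj, hx⟩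
        · exact ⟨j, hj.1, hx⟩
    have hdisjU : Disjoint (C.biUnion S) ((T \ C).biUnion S) := by
      rw [Finset.disjoint_biUnion_left]
      intro j hj
      rw [Finset.disjoint_biUnion_right]
      intro k hk
      exact hdisj j hj k hk
    have hTC : T \ C ⊂ T := by
      exact Finset.sdiff_ssubset hCT ⟨i, hiC⟩
    calc T.card * q = C.card * q + (T \ C).card * q := by
          rw [← Nat.add_mul, Finset.card_sdiff_of_subset hCT,
            Nat.add_sub_cancel' (Finset.card_le_card hCT)]
      _ ≤ (C.biUnion S).card + ((T \ C).biUnion S).card := by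
          exact Nat.add_le_add (ih C hCssub) (ih (T \ C) hTC)
      _ = (T.biUnion S).card := by
          rw [hsplit, Finset.card_union_of_disjoint hdisjU]

theorem stmt12 {ι : Type*} [DecidableEq ι] (n q : ℕ) (hq : 0 < q)
    (S : Fin n → Finset ι)
    (hhall : ∀ T : Finset (Fin n), T.Nonempty →
      ((SimpleGraph.fromRel fun a b => ((S a) ∩ (S b)).Nonempty).induce
        (T : Set (Fin n))).Connected →
      T.card * q ≤ (T.biUnion S).card) :
    ∃ c : Fin n → Finset ι,
      (∀ i, c i ⊆ S i ∧ (c i).card = q) ∧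
      ∀ i j, i ≠ j → Disjoint (c i) (c j) := by
  classical
  have key := key_biUnion S hhall
  have hall : ∀ s : Finset (Fin n × Fin q),
      s.card ≤ (s.biUnion (fun p => S p.1)).card := by
    intro s
    have h1 : s.biUnion (fun p => S p.1) = (s.image Prod.fst).biUnion S := by
      ext x; simp [Finset.mem_biUnion]
    have h2 : s.card ≤ (s.image Prod.fst).card * q := by
      have : s ⊆ (s.image Prod.fst) ×ˢ (Finset.univ : Finset (Fin q)) := by
        intro p hp
        simp only [Finset.mem_product, Finset.mem_univ, and_true]
        exact Finset.mem_image_of_mem _ hp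
      calc s.card ≤ ((s.image Prod.fst) ×ˢ (Finset.univ : Finset (Fin q))).card :=
            Finset.card_le_card this
        _ = (s.image Prod.fst).card * q := by simp [Finset.card_product]
    rw [h1]
    exact h2.trans (key _)
  obtain ⟨f, hfinj, hfmem⟩ :=
    (Finset.all_card_le_biUnion_card_iff_exists_injective (fun p : Fin n × Fin q => S p.1)).1 hall
  refine ⟨fun i => Finset.image (fun k => f (i, k)) Finset.univ, ?_, ?_⟩
  · intro i
    constructor
    · intro x hx
      simp only [Finset.mem_image] at hx
      obtain ⟨k, _, rfl⟩ := hx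
      exact hfmem (i, k)
    · rw [Finset.card_image_of_injective _ (fun a b hab => by
        have := hfinj hab; exact (Prod.mk.injEq .. ▸ this).2 |>.symm ▸ (Prod.ext_iff.1 this).2)]
      · simp
  · intro i j hij
    rw [Finset.disjoint_left]
    intro x hx hx'
    simp only [Finset.mem_image, Finset.mem_univ, true_and] at hx hx'
    obtain ⟨k, rfl⟩ := hx
    obtain ⟨l, hl⟩ := hx'
    exact hij (Prod.ext_iff.1 (hfinj hl.symm)).1
end

section
/- Let Δ ≥ 2 and set x_i = 1/(2^i · Δ^{2i}) for i ≥ 1. Then for every i ≥ 1, x_i · ∏_{j ≥ 1} (1 − x_j)^{4ijΔ^{2j}} ≥ (2·e^{16}·Δ²)^{−i}. -/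
open Real Finset

-- (1-t) ≥ exp(-2t) for 0 ≤ t ≤ 1/2
lemma exp_neg_two_mul_le {t : ℝ} (h0 : 0 ≤ t) (h1 : t ≤ 1/2) :
    Real.exp (-(2 * t)) ≤ 1 - t := by
  have h2 : 2 * t + 1 ≤ Real.exp (2 * t) := Real.add_one_le_exp _
  have h3 : Real.exp (-(2 * t)) * Real.exp (2 * t) = 1 := by
    rw [← Real.exp_add]; simp
  nlinarith [Real.exp_pos (2 * t), Real.exp_pos (-(2 * t))]

lemma sum_succ_div_two_pow_le (s : Finset ℕ) :
    ∑ j ∈ s, ((j : ℝ) + 1) / 2 ^ (j + 1) ≤ 2 := by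
  have hr : ‖(1/2 : ℝ)‖ < 1 := by rw [Real.norm_eq_abs]; rw [abs_of_pos]; norm_num; norm_num
  have hs : HasSum (fun n : ℕ => (n : ℝ) * (1/2 : ℝ) ^ n) ((1/2) / (1 - 1/2) ^ 2) :=
    hasSum_coe_mul_geometric_of_norm_lt_one hr
  have h2 : ((1/2 : ℝ) / (1 - 1/2) ^ 2) = 2 := by norm_num
  rw [h2] at hs
  calc ∑ j ∈ s, ((j : ℝ) + 1) / 2 ^ (j + 1)
      = ∑ k ∈ s.map ⟨Nat.succ, Nat.succ_injective⟩, (k : ℝ) * (1/2 : ℝ) ^ k := by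
        rw [Finset.sum_map]
        apply Finset.sum_congr rfl
        intro j _
        simp [Nat.succ_eq_add_one, div_pow, mul_div_assoc]
        rw [div_eq_mul_inv]
    _ ≤ 2 := by
        refine sum_le_hasSum _ (fun k _ => ?_) hs
        positivity

theorem stmt16 (Δ : ℕ) (hΔ : 2 ≤ Δ) (x : ℕ → ℝ)
    (hx : ∀ i, x i = 1 / (2 ^ i * (Δ : ℝ) ^ (2 * i))) (i : ℕ) (hi : 1 ≤ i) :
    ((2 * Real.exp 16 * (Δ : ℝ) ^ 2) ^ i)⁻¹ ≤
      x i * ∏' j : ℕ, (1 - x (j + 1)) ^ (4 * i * (j + 1) * Δ ^ (2 * (j + 1))) := by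
  have hD : (2:ℝ) ≤ (Δ:ℝ) := by exact_mod_cast hΔ
  have hD0 : (0:ℝ) < (Δ:ℝ) := by linarith
  set f : ℕ → ℝ := fun j => (1 - x (j + 1)) ^ (4 * i * (j + 1) * Δ ^ (2 * (j + 1))) with hf
  -- basic bounds on x (j+1)
  have hx_nonneg : ∀ j : ℕ, 0 ≤ x (j + 1) := by
    intro j; rw [hx]; positivity
  have hx_half : ∀ j : ℕ, x (j + 1) ≤ 1 / 2 := by
    intro j
    rw [hx]
    rw [div_le_div_iff₀ (by positivity) (by norm_num)]
    have h1 : (2:ℝ) ^ (j + 1) ≥ 2 := by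
      calc (2:ℝ) ^ (j+1) ≥ 2 ^ 1 := by
            apply pow_le_pow_right₀ (by norm_num); omega
        _ = 2 := by norm_num
    have h2 : (1:ℝ) ≤ (Δ:ℝ) ^ (2 * (j + 1)) := one_le_pow₀ (by linarith)
    nlinarith
  -- pointwise lower bound on factors
  have key : ∀ j : ℕ, Real.exp (-(8 * (i:ℝ) * ((j:ℝ) + 1) / 2 ^ (j + 1))) ≤ f j := by
    intro j
    have h1 : Real.exp (-(2 * x (j + 1))) ≤ 1 - x (j + 1) :=
      exp_neg_two_mul_le (hx_nonneg j) (hx_half j)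
    have h2 : (Real.exp (-(2 * x (j + 1)))) ^ (4 * i * (j + 1) * Δ ^ (2 * (j + 1)))
        ≤ f j := by
      apply pow_le_pow_left₀ (Real.exp_pos _).le h1
    refine le_trans (le_of_eq ?_) h2
    rw [← Real.exp_nat_mul]
    congr 1
    rw [hx]
    have hne : ((Δ:ℝ)) ^ (2 * (j + 1)) ≠ 0 := by positivity
    push_cast
    field_simp
    ring
  have hf_nonneg : ∀ j, 0 ≤ f j := fun j => by
    have := (Real.exp_pos (-(8 * (i:ℝ) * ((j:ℝ) + 1) / 2 ^ (j + 1)))).le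
    exact le_trans this (key j)
  have hf_le_one : ∀ j, f j ≤ 1 := by
    intro j
    apply pow_le_one₀
    · have h1 : 1 - x (j+1) ≥ 0 := by linarith [hx_half j]
      linarith [hx_nonneg j]
    · linarith [hx_nonneg j]
  -- finite products bounded below
  have hfin : ∀ s : Finset ℕ, Real.exp (-(16 * (i:ℝ))) ≤ ∏ j ∈ s, f j := by
    intro s
    calc Real.exp (-(16 * (i:ℝ)))
        ≤ Real.exp (∑ j ∈ s, -(8 * (i:ℝ) * ((j:ℝ) + 1) / 2 ^ (j + 1))) := by
          apply Real.exp_le_exp.2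
          have hsum : ∑ j ∈ s, 8 * (i:ℝ) * ((j:ℝ) + 1) / 2 ^ (j + 1) ≤ 16 * (i:ℝ) := by
            have h2 := sum_succ_div_two_pow_le s
            calc ∑ j ∈ s, 8 * (i:ℝ) * ((j:ℝ) + 1) / 2 ^ (j + 1)
                = 8 * (i:ℝ) * ∑ j ∈ s, ((j:ℝ) + 1) / 2 ^ (j + 1) := by
                  rw [Finset.mul_sum]
                  exact Finset.sum_congr rfl (fun j _ => by ring)
              _ ≤ 8 * (i:ℝ) * 2 := by
                  apply mul_le_mul_of_nonneg_left h2 (by positivity)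
              _ = 16 * (i:ℝ) := by ring
          have hneg : ∑ j ∈ s, -(8 * (i:ℝ) * ((j:ℝ) + 1) / 2 ^ (j + 1))
              = -∑ j ∈ s, 8 * (i:ℝ) * ((j:ℝ) + 1) / 2 ^ (j + 1) := by
            simp [Finset.sum_neg_distrib]
          rw [hneg]
          linarith
      _ = ∏ j ∈ s, Real.exp (-(8 * (i:ℝ) * ((j:ℝ) + 1) / 2 ^ (j + 1))) :=
          (Real.exp_sum s _)
      _ ≤ ∏ j ∈ s, f j := Finset.prod_le_prod (fun j _ => (Real.exp_pos _).le)
            (fun j _ => key j)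
  -- tprod bound
  have htp : Real.exp (-(16 * (i:ℝ))) ≤ ∏' j, f j := by
    by_cases hM : Multipliable f
    · exact ge_of_tendsto' hM.hasProd hfin
    · rw [tprod_eq_one_of_not_multipliable hM]
      have h0 : -(16 * (i:ℝ)) ≤ 0 := neg_nonpos.2 (by positivity)
      calc Real.exp (-(16 * (i:ℝ))) ≤ Real.exp 0 := Real.exp_le_exp.2 h0
        _ = 1 := Real.exp_zero
  -- conclude
  have hxi : 0 < x i := by rw [hx]; positivity
  calc ((2 * Real.exp 16 * (Δ : ℝ) ^ 2) ^ i)⁻¹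
      = x i * Real.exp (-(16 * (i:ℝ))) := by
        rw [hx, Real.exp_neg]
        have h1 : Real.exp (16 * (i:ℝ)) = (Real.exp 16) ^ i := by
          rw [mul_comm, Real.exp_nat_mul]
        rw [h1, mul_pow, mul_pow, ← pow_mul]
        have e1 : (0:ℝ) < Real.exp 16 := Real.exp_pos _
        field_simp
      _ ≤ x i * ∏' j, f j := by
        exact mul_le_mul_of_nonneg_left htp hxi.le
end
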